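/- Let H ∈ ℂ^{K×N}, S ∈ ℂ^{K×L} with N ≤ L, and let P_T > 0, L > 0. Suppose Hᴴ S admits a singular value decomposition Hᴴ S = U Σ Vᴴ with U an N×N unitary matrix, V an L×L unitary matrix, and Σ a real N×L matrix with Σ_{ij} = 0 for i ≠ j and Σ_{ii} ≥ 0. Then X* = √(L·P_T/N) · U I_{N×L} Vᴴ satisfies (1/L) X* X*ᴴ = (P_T/N) I_N, and for every X ∈ ℂ^{N×L} with (1/L) X Xᴴ = (P_T/N) I_N one has ‖H X* − S‖_F ≤ ‖H X − S‖_F. That is, X* is a global minimizer of the MUI energy ‖HX − S‖_F² under the omnidirectional (orthogonal waveform) constraint. -/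

import Mathlib

/-
The constraint says exactly that `X Xᴴ = r I` with `r = L P_T / N`, and under it
`‖H X − S‖_F² = r ‖H‖_F² + ‖S‖_F² − 2 Re tr(Xᴴ Hᴴ S)`, so `X` must maximise `Re tr(Xᴴ Hᴴ S)`.
With `Y = Uᴴ X V` (again `Y Yᴴ = r I`) this is `Re tr(Yᴴ Σ) = ∑ σᵢ Re Yᵢᵢ`, and each `|Yᵢᵢ|` is
at most the norm `√r` of the `i`-th row of `Y`; the bound is attained by `Y = √r I_{N×L}`,
i.e. by `X* = √r U I_{N×L} Vᴴ`.
-/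

open Matrix

/-- Squared Frobenius norm of a complex matrix: `‖M‖_F² = Re tr(Mᴴ M)`. -/
noncomputable def frobSq {m n : ℕ} (M : Matrix (Fin m) (Fin n) ℂ) : ℝ :=
  (Matrix.trace (Mᴴ * M)).re

/-- Frobenius norm. -/
noncomputable def frobNorm {m n : ℕ} (M : Matrix (Fin m) (Fin n) ℂ) : ℝ :=
  Real.sqrt (frobSq M)

/-- The `N × L` rectangular "identity": ones on the main diagonal, zeros elsewhere. -/
def rectId (N L : ℕ) : Matrix (Fin N) (Fin L) ℂ :=
  Matrix.of fun i j => if (i : ℕ) = (j : ℕ) then 1 else 0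

lemma mul_mul_mul_conjTranspose_of_mul_conjTranspose_eq_one {m n p : Type*} [Fintype n]
    [Fintype p] [DecidableEq p] (A : Matrix m n ℂ) (B : Matrix n p ℂ) {C : Matrix p p ℂ}
    (hC : C * Cᴴ = 1) : (A * B * C) * (A * B * C)ᴴ = A * (B * Bᴴ) * Aᴴ := by
  simp only [conjTranspose_mul, Matrix.mul_assoc]
  rw [← Matrix.mul_assoc C, hC, Matrix.one_mul]

lemma trace_conjTranspose_mul_mul_mul {m n p : Type*} [Fintype m] [Fintype n] [Fintype p]
    (X : Matrix m p ℂ) (U : Matrix m n ℂ) (A : Matrix n p ℂ) (V : Matrix p p ℂ) :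
    trace (Xᴴ * (U * A * Vᴴ)) = trace ((Uᴴ * X * V)ᴴ * A) := by
  simp only [conjTranspose_mul, conjTranspose_conjTranspose, Matrix.mul_assoc]
  rw [trace_mul_comm Vᴴ]
  simp only [Matrix.mul_assoc]

lemma re_le_sqrt_of_mul_conjTranspose_eq_smul {m n : Type*} [Fintype n] [DecidableEq m]
    {Y : Matrix m n ℂ} {r : ℝ} (hY : Y * Yᴴ = (r : ℂ) • 1) (i : m) (j : n) :
    (Y i j).re ≤ √r := by
  have hrow : ∑ k, Complex.normSq (Y i k) = r := by
    have := congrArg Complex.re (congrFun (congrFun hY i) i)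
    simpa [mul_apply, Complex.mul_conj] using this
  calc (Y i j).re ≤ ‖Y i j‖ := Complex.re_le_norm _
    _ = √(Complex.normSq (Y i j)) := Complex.norm_def _
    _ ≤ √r := Real.sqrt_le_sqrt <|
        hrow ▸ Finset.single_le_sum (fun k _ => Complex.normSq_nonneg _) (Finset.mem_univ j)

lemma frobSq_mul_sub_of_mul_conjTranspose_eq_smul {K N L : ℕ} (H : Matrix (Fin K) (Fin N) ℂ)
    (S : Matrix (Fin K) (Fin L) ℂ) {X : Matrix (Fin N) (Fin L) ℂ} {r : ℝ}
    (hX : X * Xᴴ = (r : ℂ) • 1) :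
    frobSq (H * X - S) =
      r * (trace (Hᴴ * H)).re + frobSq S - 2 * (trace (Xᴴ * (Hᴴ * S))).re := by
  have hexpand : (H * X - S)ᴴ * (H * X - S) =
      Xᴴ * (Hᴴ * (H * X)) - Sᴴ * (H * X) - Xᴴ * (Hᴴ * S) + Sᴴ * S := by
    simp only [conjTranspose_sub, conjTranspose_mul, Matrix.sub_mul, Matrix.mul_sub,
      Matrix.mul_assoc]
    abel
  have hquad : trace (Xᴴ * (Hᴴ * (H * X))) = r * trace (Hᴴ * H) := by
    rw [trace_mul_comm, show Hᴴ * (H * X) * Xᴴ = Hᴴ * H * (X * Xᴴ) by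
      simp only [Matrix.mul_assoc], hX, Matrix.mul_smul, Matrix.mul_one, trace_smul, smul_eq_mul]
  have hcross : (trace (Sᴴ * (H * X))).re = (trace (Xᴴ * (Hᴴ * S))).re := by
    rw [← conjTranspose_conjTranspose (Sᴴ * (H * X)), trace_conjTranspose]
    simp [Matrix.mul_assoc]
  simp only [frobSq, hexpand, trace_add, trace_sub, Complex.add_re, Complex.sub_re, hquad, hcross,
    Complex.re_ofReal_mul]
  ring

section Diagonal

variable {N L : ℕ}

lemma rectId_mul_conjTranspose (hNL : N ≤ L) : rectId N L * (rectId N L)ᴴ = 1 := by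
  ext i j
  simp only [mul_apply, conjTranspose_apply, rectId, of_apply, one_apply]
  rw [Finset.sum_eq_single (Fin.castLE hNL i)]
  · by_cases h : i = j <;> simp [h]
    intro hij; exact h (Fin.ext (by omega))
  · intro k _ hk
    have : (i : ℕ) ≠ k := fun h => hk (Fin.ext h.symm)
    simp [this]
  · simp

variable (hNL : N ≤ L) {Sig : Matrix (Fin N) (Fin L) ℝ}
  (hSigOff : ∀ (i : Fin N) (j : Fin L), (i : ℕ) ≠ (j : ℕ) → Sig i j = 0)
include hSigOff

lemma re_trace_conjTranspose_mul_eq_sum_diag (Y : Matrix (Fin N) (Fin L) ℂ) :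
    (trace (Yᴴ * Sig.map (fun x => (x : ℂ)))).re =
      ∑ i, Sig i (Fin.castLE hNL i) * (Y i (Fin.castLE hNL i)).re := by
  simp only [trace, diag, mul_apply, conjTranspose_apply, map_apply, Complex.re_sum]
  rw [Finset.sum_comm]
  refine Finset.sum_congr rfl fun i _ => ?_
  rw [Finset.sum_eq_single (Fin.castLE hNL i)]
  · simp [Complex.mul_re, mul_comm]
  · intro j _ hj
    simp [hSigOff i j fun h => hj (Fin.ext h.symm)]
  · simp

lemma re_trace_conjTranspose_mul_le {Y : Matrix (Fin N) (Fin L) ℂ} {r : ℝ}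
    (hSigDiag : ∀ i : Fin N, 0 ≤ Sig i (Fin.castLE hNL i)) (hY : Y * Yᴴ = (r : ℂ) • 1) :
    (trace (Yᴴ * Sig.map (fun x => (x : ℂ)))).re ≤
      (trace ((√r • rectId N L)ᴴ * Sig.map (fun x => (x : ℂ)))).re := by
  rw [re_trace_conjTranspose_mul_eq_sum_diag hNL hSigOff,
    re_trace_conjTranspose_mul_eq_sum_diag hNL hSigOff]
  refine Finset.sum_le_sum fun i _ => mul_le_mul_of_nonneg_left ?_ (hSigDiag i)
  have hdiag : ((√r • rectId N L) i (Fin.castLE hNL i)).re = √r := by simp [rectId]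
  rw [hdiag]
  exact re_le_sqrt_of_mul_conjTranspose_eq_smul hY i (Fin.castLE hNL i)

end Diagonal

lemma inv_smul_eq_smul_one_iff {N L : ℕ} (hL : L ≠ 0) (P_T : ℝ) (M : Matrix (Fin N) (Fin N) ℂ) :
    (L : ℂ)⁻¹ • M = ((P_T / N : ℝ) : ℂ) • 1 ↔ M = ((L * P_T / N : ℝ) : ℂ) • 1 := by
  rw [inv_smul_eq_iff₀ (Nat.cast_ne_zero.mpr hL), smul_smul]
  push_cast
  ring_nf

theorem stmt2 {K N L : ℕ} (hNL : N ≤ L) (hL : 0 < L) (P_T : ℝ) (hPT : 0 < P_T)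
    (H : Matrix (Fin K) (Fin N) ℂ) (S : Matrix (Fin K) (Fin L) ℂ)
    (U : Matrix (Fin N) (Fin N) ℂ) (V : Matrix (Fin L) (Fin L) ℂ)
    (Sig : Matrix (Fin N) (Fin L) ℝ)
    (hU₁ : U * Uᴴ = 1) (hU₂ : Uᴴ * U = 1)
    (hV₁ : V * Vᴴ = 1) (hV₂ : Vᴴ * V = 1)
    (hSigOff : ∀ (i : Fin N) (j : Fin L), (i : ℕ) ≠ (j : ℕ) → Sig i j = 0)
    (hSigDiag : ∀ i : Fin N, 0 ≤ Sig i (Fin.castLE hNL i))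
    (hSVD : Hᴴ * S = U * Sig.map (fun x => (x : ℂ)) * Vᴴ) :
    (((L : ℂ))⁻¹ • ((Real.sqrt (L * P_T / N) • (U * rectId N L * Vᴴ)) *
        (Real.sqrt (L * P_T / N) • (U * rectId N L * Vᴴ))ᴴ) = ((P_T / N : ℝ) : ℂ) • 1) ∧
    ∀ X : Matrix (Fin N) (Fin L) ℂ,
      ((L : ℂ))⁻¹ • (X * Xᴴ) = ((P_T / N : ℝ) : ℂ) • 1 →
      frobNorm (H * (Real.sqrt (L * P_T / N) • (U * rectId N L * Vᴴ)) - S) ≤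
        frobNorm (H * X - S) := by
  set r : ℝ := L * P_T / N
  set Xs := √r • (U * rectId N L * Vᴴ)
  have hr : 0 ≤ r := by positivity
  have hXs : Xs * Xsᴴ = (r : ℂ) • 1 := by
    have hVct : Vᴴ * Vᴴᴴ = 1 := by rw [conjTranspose_conjTranspose, hV₂]
    rw [conjTranspose_smul, smul_mul, Matrix.mul_smul, smul_smul, star_trivial,
      Real.mul_self_sqrt hr, mul_mul_mul_conjTranspose_of_mul_conjTranspose_eq_one _ _ hVct,
      rectId_mul_conjTranspose hNL, Matrix.mul_one, hU₁, Complex.coe_smul]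
  have hXsSVD : Uᴴ * Xs * V = √r • rectId N L := by
    rw [Matrix.mul_smul, smul_mul, show Uᴴ * (U * rectId N L * Vᴴ) * V =
      Uᴴ * U * rectId N L * (Vᴴ * V) by simp only [Matrix.mul_assoc], hU₂, hV₂,
      Matrix.one_mul, Matrix.mul_one]
  refine ⟨(inv_smul_eq_smul_one_iff hL.ne' P_T _).2 hXs, fun X hX => ?_⟩
  have hXX := (inv_smul_eq_smul_one_iff hL.ne' P_T _).1 hX
  have hY : (Uᴴ * X * V) * (Uᴴ * X * V)ᴴ = (r : ℂ) • 1 := by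
    rw [mul_mul_mul_conjTranspose_of_mul_conjTranspose_eq_one _ _ hV₁, hXX, Matrix.mul_smul,
      smul_mul, Matrix.mul_one, conjTranspose_conjTranspose, hU₂]
  have key : (trace (Xᴴ * (Hᴴ * S))).re ≤ (trace (Xsᴴ * (Hᴴ * S))).re := by
    rw [hSVD, trace_conjTranspose_mul_mul_mul, trace_conjTranspose_mul_mul_mul, hXsSVD]
    exact re_trace_conjTranspose_mul_le hNL hSigOff hSigDiag hY
  refine Real.sqrt_le_sqrt ?_
  rw [frobSq_mul_sub_of_mul_conjTranspose_eq_smul H S hXs,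
    frobSq_mul_sub_of_mul_conjTranspose_eq_smul H S hXX]
  linarith
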